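/- The flow ḃ_k = a_k^{(1)} − a_{k−1}^{(1)}, ȧ_k^{(j)} = a_k^{(j)}(b_{k+j}−b_k) + (a_k^{(j+1)} − a_{k−1}^{(j+1)}) (with a^{(m+1)} := 0) is Hamiltonian with respect to the linear bracket {b_k, a_k^{(j)}}₁ = −a_k^{(j)}, {a_k^{(j)}, b_{k+j}}₁ = −a_k^{(j)}, {a_k^{(i)}, a_{k+i}^{(j)}}₁ = −a_k^{(i+j)} (i+j ≤ m), with Hamilton function H₂ = (1/2)Σ_k b_k² + Σ_k a_k^{(1)}; that is, ḃ_k = {H₂, b_k}₁ and ȧ_k^{(j)} = {H₂, a_k^{(j)}}₁ for all k, j. -/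

import Mathlib

/-- Coordinate index set: `inl k ↦ b_k`, `inr (j,k) ↦ a_k^{(j)}` with paper level `(j:ℕ)+1`. -/
abbrev TLIdx14 (N m : ℕ) := ZMod N ⊕ (Fin m × ZMod N)

/-- Structure matrix of the linear bracket `{·,·}₁`. -/
def TLP14 (N m : ℕ) (u v : TLIdx14 N m) (p : TLIdx14 N m → ℝ) : ℝ :=
  match u, v with
  | .inl _, .inl _ => 0
  | .inl k, .inr (j, l) =>
      (if l = k then -p (.inr (j, l)) else 0) +
      (if k = l + (((j : ℕ) + 1 : ℕ) : ZMod N) then p (.inr (j, l)) else 0)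
  | .inr (j, l), .inl k =>
      (if l = k then p (.inr (j, l)) else 0) +
      (if k = l + (((j : ℕ) + 1 : ℕ) : ZMod N) then -p (.inr (j, l)) else 0)
  | .inr (i, k), .inr (j, l) =>
      (if h : (i : ℕ) + (j : ℕ) + 2 ≤ m ∧ l = k + (((i : ℕ) + 1 : ℕ) : ZMod N)
        then -p (.inr (⟨(i : ℕ) + (j : ℕ) + 1, by omega⟩, k)) else 0) +
      (if h : (i : ℕ) + (j : ℕ) + 2 ≤ m ∧ k = l + (((j : ℕ) + 1 : ℕ) : ZMod N)
        then p (.inr (⟨(i : ℕ) + (j : ℕ) + 1, by omega⟩, l)) else 0)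

/-- The Hamilton function `H₂ = (1/2)Σ b_k² + Σ a_k^{(1)}`. -/
noncomputable def TLH2 (N m : ℕ) [NeZero N] (hm : 0 < m) (q : TLIdx14 N m → ℝ) : ℝ :=
  (1 / 2) * ∑ k : ZMod N, q (.inl k) ^ 2 + ∑ k : ZMod N, q (.inr (⟨0, hm⟩, k))


lemma TLshift_eq {N : ℕ} (k l c : ZMod N) : (k = l + c) = (l = k - c) :=
  propext ((eq_sub_iff_add_eq.trans eq_comm).symm)

lemma TLfin_eq {m : ℕ} (hm : 0 < m) (i : Fin m) : ((i : ℕ) = 0) = (i = ⟨0, hm⟩) := by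
  simp [Fin.ext_iff]

lemma TLH2_hasFDerivAt (N m : ℕ) [NeZero N] (hm : 0 < m) (p : TLIdx14 N m → ℝ) :
    HasFDerivAt (TLH2 N m hm)
      ((1/2 : ℝ) • (∑ k : ZMod N, (2 * p (.inl k)) •
          ContinuousLinearMap.proj (R := ℝ) (φ := fun _ : TLIdx14 N m => ℝ) (.inl k))
        + ∑ k : ZMod N,
          ContinuousLinearMap.proj (R := ℝ) (φ := fun _ : TLIdx14 N m => ℝ) (.inr (⟨0, hm⟩, k))) p := by
  have h1 : HasFDerivAt (fun q : TLIdx14 N m → ℝ => ∑ k : ZMod N, q (.inl k) ^ 2)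
      (∑ k : ZMod N, (2 * p (.inl k)) •
        ContinuousLinearMap.proj (R := ℝ) (φ := fun _ : TLIdx14 N m => ℝ) (.inl k)) p := by
    apply HasFDerivAt.fun_sum
    intro k _
    have h := (ContinuousLinearMap.proj (R := ℝ) (φ := fun _ : TLIdx14 N m => ℝ)
        (Sum.inl k : TLIdx14 N m)).hasFDerivAt (x := p)
    have := h.mul h
    simp only [ContinuousLinearMap.proj_apply] at this
    convert this using 1
    · ext q; simp [sq]
    · ext q; simp [sq]
    · rw [two_mul, add_smul]
  have h2 : HasFDerivAt (fun q : TLIdx14 N m → ℝ => ∑ k : ZMod N, q (.inr (⟨0, hm⟩, k)))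
      (∑ k : ZMod N,
        ContinuousLinearMap.proj (R := ℝ) (φ := fun _ : TLIdx14 N m => ℝ) (.inr (⟨0, hm⟩, k))) p := by
    apply HasFDerivAt.fun_sum
    intro k _
    exact (ContinuousLinearMap.proj (R := ℝ) (φ := fun _ : TLIdx14 N m => ℝ)
        (Sum.inr (⟨0, hm⟩, k) : TLIdx14 N m)).hasFDerivAt
  exact (h1.const_mul (1/2)).add h2

lemma fderiv_TLH2_single (N m : ℕ) [NeZero N] (hm : 0 < m) (p : TLIdx14 N m → ℝ)
    (u : TLIdx14 N m) :
    fderiv ℝ (TLH2 N m hm) p (Pi.single u 1) =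
      Sum.elim (fun k => p (.inl k)) (fun jk => if (jk.1 : ℕ) = 0 then 1 else 0) u := by
  rw [(TLH2_hasFDerivAt N m hm p).fderiv]
  cases u with
  | inl k =>
      simp [ContinuousLinearMap.sum_apply, Pi.single_apply, mul_ite,
        Finset.sum_ite_eq', mul_comm]
  | inr jk =>
      obtain ⟨j, l⟩ := jk
      by_cases hj : j = (⟨0, hm⟩ : Fin m)
      · subst hj
        simp [ContinuousLinearMap.sum_apply, Pi.single_apply, mul_ite,
          Prod.ext_iff, Finset.sum_ite_eq', eq_comm]
      · have hj' : (j:ℕ) ≠ 0 := fun h => hj (Fin.ext (by simpa using h))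
        simp [ContinuousLinearMap.sum_apply, Pi.single_apply, mul_ite,
          Prod.ext_iff, hj', Ne.symm hj', hj, fun h => hj (Eq.symm h), Fin.ext_iff]


/-- the lattice KP flow is Hamiltonian with respect to the linear
bracket, with Hamilton function `H₂`: `ḃ_k = {H₂, b_k}₁`, `ȧ_k^{(j)} = {H₂, a_k^{(j)}}₁`
(with `a^{(m+1)} := 0`). -/
theorem stmt14 (N m : ℕ) [NeZero N] (hm : 0 < m) :
    ∀ p : TLIdx14 N m → ℝ,
      (∀ k : ZMod N,
        p (.inr (⟨0, hm⟩, k)) - p (.inr (⟨0, hm⟩, k - 1))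
          = ∑ u : TLIdx14 N m,
              fderiv ℝ (TLH2 N m hm) p (Pi.single u 1) * TLP14 N m u (.inl k) p) ∧
      (∀ (j : Fin m) (k : ZMod N),
        p (.inr (j, k)) * (p (.inl (k + (((j : ℕ) + 1 : ℕ) : ZMod N))) - p (.inl k))
          + ((if h : (j : ℕ) + 1 < m then p (.inr (⟨(j : ℕ) + 1, h⟩, k)) else 0)
             - (if h : (j : ℕ) + 1 < m then p (.inr (⟨(j : ℕ) + 1, h⟩, k - 1)) else 0))
          = ∑ u : TLIdx14 N m,
              fderiv ℝ (TLH2 N m hm) p (Pi.single u 1) * TLP14 N m u (.inr (j, k)) p) := by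
  intro p
  have hfd : ∀ u : TLIdx14 N m, fderiv ℝ (TLH2 N m hm) p (Pi.single u 1) =
      Sum.elim (fun k => p (.inl k)) (fun jk => if (jk.1 : ℕ) = 0 then 1 else 0) u :=
    fderiv_TLH2_single N m hm p
  constructor
  · intro k
    simp only [hfd]
    rw [Fintype.sum_sum_type, Fintype.sum_prod_type]
    simp [TLP14, boole_mul, TLfin_eq hm, Finset.sum_ite_irrel, Finset.sum_dite_irrel,
      Finset.sum_ite_eq']
    simp only [Finset.sum_add_distrib, TLshift_eq k, Finset.sum_ite_eq',
      Finset.mem_univ, if_true]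
    ring
  · intro j k
    simp only [hfd]
    rw [Fintype.sum_sum_type, Fintype.sum_prod_type]
    simp [TLP14, boole_mul, TLfin_eq hm, Finset.sum_ite_irrel, Finset.sum_dite_irrel,
      Finset.sum_ite_eq']
    by_cases hj : (j : ℕ) + 1 < m
    · have h2 : (j : ℕ) + 2 ≤ m := by omega
      simp [hj, h2, true_and, mul_add, mul_ite, Finset.sum_add_distrib, TLshift_eq k,
        Finset.sum_ite_eq', Finset.sum_dite_eq']
      ring
    · have h2 : ¬ ((j : ℕ) + 2 ≤ m) := by omega
      simp [hj, h2, mul_add, mul_ite, Finset.sum_add_distrib, TLshift_eq k,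
        Finset.sum_ite_eq']
      ring
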